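/- Let ρ be an n-qubit state (a 2ⁿ×2ⁿ positive semidefinite complex matrix of trace 1, indexed by 𝔽₂ⁿ), and let Weyl(ρ) = {v ∈ 𝔽₂^{2n} : (tr(ρ W_v))² = 1}. If a ∈ 𝔽₂ⁿ satisfies r_ρ(a) > 0, where r_ρ(a) = Σ_{x ∈ 𝔽₂ⁿ} ρ_{x,x} ρ_{x+a,x+a}, then (a, 0) ∈ (Weyl(ρ) ∩ 𝒵)^⊥ ∩ 𝒳. -/
import Mathlib


open ComplexOrder

/-- The field with two elements. -/
abbrev F2 := ZMod 2

/-- The phase space `V = 𝔽₂ⁿ × 𝔽₂ⁿ`. -/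
abbrev V (n : ℕ) : Type := (Fin n → F2) × (Fin n → F2)

/-- The symplectic form `[a,b] = aₓ·b_z + a_z·bₓ` on `V n`. -/
def symp {n : ℕ} (a b : V n) : F2 :=
  (∑ i, a.1 i * b.2 i) + (∑ i, a.2 i * b.1 i)

/-- Symplectic complement of a subset `A ⊆ V n`. -/
def sperp {n : ℕ} (A : Set (V n)) : Set (V n) :=
  {x | ∀ a ∈ A, symp x a = 0}

/-- The subspace `𝒵 = {(0,z)}` of `V n`, as a set. -/
def Zset (n : ℕ) : Set (V n) := {v | v.1 = 0}

/-- The subspace `𝒳 = {(x,0)}` of `V n`, as a set. -/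
def Xset (n : ℕ) : Set (V n) := {v | v.2 = 0}

/-- The Weyl operator `W_v` with entries
`(W_v)_{x,y} = i^{vₓ·v_z} (−1)^{v_z·y} 1{x = y + vₓ}`. -/
noncomputable def Weyl {n : ℕ} (v : V n) : Matrix (Fin n → F2) (Fin n → F2) ℂ :=
  fun x y =>
    Complex.I ^ (∑ i, (v.1 i).val * (v.2 i).val) *
      (-1 : ℂ) ^ (∑ i, (v.2 i) * (y i)).val *
      (if x = y + v.1 then 1 else 0)

/-- `Weyl(ρ) = {v : (tr(ρ W_v))² = 1}`. -/
noncomputable def weylSet {n : ℕ} (ρ : Matrix (Fin n → F2) (Fin n → F2) ℂ) :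
    Set (V n) :=
  {v | (Matrix.trace (ρ * Weyl v)) ^ 2 = 1}

lemma neg_one_pow_val_add (u w : F2) :
    ((-1 : ℝ)) ^ (u + w).val = (-1 : ℝ) ^ u.val * (-1 : ℝ) ^ w.val := by
  rw [ZMod.val_add, ← neg_one_pow_eq_pow_mod_two, pow_add]

lemma trace_weyl_z {n : ℕ} (ρ : Matrix (Fin n → F2) (Fin n → F2) ℂ) (z : Fin n → F2) :
    Matrix.trace (ρ * Weyl ((0, z) : V n)) =
      ∑ x, ρ x x * ((-1 : ℂ)) ^ (∑ i, z i * x i).val := by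
  rw [Matrix.trace]
  congr 1
  funext x
  rw [Matrix.diag_apply, Matrix.mul_apply]
  rw [Finset.sum_eq_single x]
  · simp [Weyl]
  · intro y _ hy
    simp only [Weyl]
    rw [if_neg (by simpa using hy)]
    ring
  · simp

/-- For an `n`-qubit state `ρ` (PSD of trace 1), if `a ∈ 𝔽₂ⁿ` satisfies
`r_ρ(a) > 0` with `r_ρ(a) = Σ_x ρ_{x,x} ρ_{x+a,x+a}`, then
`(a,0) ∈ (Weyl(ρ) ∩ 𝒵)^⊥ ∩ 𝒳`. -/
theorem stmt14 (n : ℕ) (ρ : Matrix (Fin n → F2) (Fin n → F2) ℂ)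
    (hpsd : ρ.PosSemidef) (htr : ρ.trace = 1) (a : Fin n → F2)
    (hr : 0 < (∑ x, ρ x x * ρ (x + a) (x + a)).re) :
    ((a, 0) : V n) ∈ sperp (weylSet ρ ∩ Zset n) ∩ Xset n := by
  -- diagonal entries are real and nonneg
  set t : (Fin n → F2) → ℝ := fun x => (ρ x x).re with ht
  have hdiag : ∀ x, ρ x x = (t x : ℂ) := by
    intro x
    have h0 : (0 : ℂ) ≤ ρ x x := by
      have := hpsd.dotProduct_mulVec_nonneg (Pi.single x 1)
      simpa [dotProduct, Matrix.mulVec, Pi.single_apply, Finset.mul_sum] using this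
    obtain ⟨hre, him⟩ := Complex.nonneg_iff.mp h0
    exact Complex.ext rfl him.symm
  have htnn : ∀ x, 0 ≤ t x := by
    intro x
    have h0 : (0 : ℂ) ≤ ρ x x := by
      have := hpsd.dotProduct_mulVec_nonneg (Pi.single x 1)
      simpa [dotProduct, Matrix.mulVec, Pi.single_apply, Finset.mul_sum] using this
    exact (Complex.nonneg_iff.mp h0).1
  have htsum : ∑ x, t x = 1 := by
    have : (ρ.trace).re = 1 := by rw [htr]; simp
    rw [Matrix.trace] at this
    simpa [Matrix.diag, Complex.re_sum, ht] using this
  -- there exists x with t x > 0 and t (x+a) > 0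
  obtain ⟨x₀, -, hx₀⟩ : ∃ x ∈ Finset.univ, (0:ℝ) < t x * t (x + a) := by
    by_contra hcon
    push_neg at hcon
    have : (∑ x, ρ x x * ρ (x + a) (x + a)).re ≤ 0 := by
      rw [Complex.re_sum]
      apply Finset.sum_nonpos
      intro x hx
      have : (ρ x x * ρ (x + a) (x + a)).re = t x * t (x + a) := by
        rw [hdiag x, hdiag (x + a)]
        simp
      rw [this]
      exact hcon x hx
    linarith
  have hx1 : 0 < t x₀ := by
    by_contra h
    push_neg at h
    nlinarith [htnn x₀, htnn (x₀ + a)]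
  have hx2 : 0 < t (x₀ + a) := by
    by_contra h
    push_neg at h
    nlinarith [htnn x₀, htnn (x₀ + a)]
  constructor
  · -- sperp condition
    intro v hv
    obtain ⟨hw, hz⟩ := hv
    obtain ⟨z, rfl⟩ : ∃ z : Fin n → F2, v = ((0, z) : V n) := by
      refine ⟨v.2, ?_⟩
      have : v.1 = 0 := hz
      exact Prod.ext this rfl
    -- sign function
    set s : (Fin n → F2) → ℝ := fun x => (-1 : ℝ) ^ (∑ i, z i * x i).val with hs
    have hsval : ∀ x, s x = 1 ∨ s x = -1 := by
      intro x
      rcases Nat.even_or_odd ((∑ i, z i * x i).val) with he | ho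
      · left; exact he.neg_one_pow
      · right; exact ho.neg_one_pow
    -- trace as a real sum
    have htrw : Matrix.trace (ρ * Weyl ((0, z) : V n)) = ((∑ x, t x * s x : ℝ) : ℂ) := by
      rw [trace_weyl_z]
      push_cast
      congr 1
      funext x
      rw [hdiag x]
      norm_num [hs]
    set S : ℝ := ∑ x, t x * s x with hS
    have hS2 : S ^ 2 = 1 := by
      have := hw
      simp only [weylSet, Set.mem_setOf_eq, htrw] at this
      exact_mod_cast this
    have hScases : S = 1 ∨ S = -1 := by
      have h0 : (S - 1) * (S + 1) = 0 := by nlinarith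
      rcases mul_eq_zero.mp h0 with h | h
      · left; linarith
      · right; linarith
    -- sign constancy on support
    have hkey : s x₀ = s (x₀ + a) := by
      have hterm : ∀ (σ : ℝ), (σ = 1 ∨ σ = -1) → (S = σ) →
          ∀ x, 0 < t x → s x = σ := by
        intro σ hσ hSσ x hx
        have hσ2 : σ * σ = 1 := by rcases hσ with h | h <;> rw [h] <;> norm_num
        have hsum0 : ∑ y, t y * (1 - σ * s y) = 0 := by
          have heq : ∑ y, t y * (1 - σ * s y) = (∑ y, t y) - σ * S := by
            rw [hS, Finset.mul_sum, ← Finset.sum_sub_distrib]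
            congr 1; funext y; ring
          rw [heq, htsum, hSσ, hσ2]; ring
        have hnn : ∀ y ∈ Finset.univ, 0 ≤ t y * (1 - σ * s y) := by
          intro y _
          apply mul_nonneg (htnn y)
          rcases hsval y with h | h <;> rcases hσ with h' | h' <;> rw [h, h'] <;> norm_num
        have h0 := (Finset.sum_eq_zero_iff_of_nonneg hnn).mp hsum0 x (Finset.mem_univ x)
        have hne : t x ≠ 0 := ne_of_gt hx
        have hfin : 1 - σ * s x = 0 := by
          rcases mul_eq_zero.mp h0 with h | h
          · exact absurd h hne
          · exact h
        rcases hσ with h' | h' <;> rcases hsval x with h | h <;>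
          rw [h, h'] at hfin ⊢ <;> norm_num at hfin
      rcases hScases with h | h
      · rw [hterm 1 (Or.inl rfl) h x₀ hx1, hterm 1 (Or.inl rfl) h (x₀ + a) hx2]
      · rw [hterm (-1) (Or.inr rfl) h x₀ hx1, hterm (-1) (Or.inr rfl) h (x₀ + a) hx2]
    -- deduce z·a = 0
    have hsplit : s (x₀ + a) = s x₀ * (-1 : ℝ) ^ (∑ i, z i * a i).val := by
      rw [hs]
      simp only
      rw [← neg_one_pow_val_add]
      congr 1
      congr 1
      rw [← Finset.sum_add_distrib]
      congr 1; funext i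
      simp [Pi.add_apply, mul_add]
    have hsne : s x₀ ≠ 0 := by rcases hsval x₀ with h | h <;> simp [h]
    have hpow1 : (-1 : ℝ) ^ (∑ i, z i * a i).val = 1 := by
      have := hkey
      rw [hsplit] at this
      field_simp at this
      nlinarith [this]
    have hval : (∑ i, z i * a i).val = 0 := by
      have heven := (neg_one_pow_eq_one_iff_even (by norm_num : (-1:ℝ) ≠ 1)).mp hpow1
      have hlt : (∑ i, z i * a i).val < 2 := ZMod.val_lt _
      rcases heven with ⟨k, hk⟩
      omega
    have hza : (∑ i, z i * a i) = 0 := (ZMod.val_eq_zero _).mp hval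
    rw [symp]
    simp only
    have : (∑ i, a i * z i) = 0 := by
      rw [← hza]; congr 1; funext i; ring
    simp [this]
  · -- Xset
    rfl
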